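/- arXiv:2302.05199 — 3 statements merged into one kernel-verified Lean document; each statement's English description precedes it below -/
import Mathlib

section
/- Let X be a complex Banach space and T a power bounded operator on X (i.e. sup_{n≥0} ‖T^n‖ < ∞) which is mean ergodic, i.e. for every x ∈ X the Cesàro averages (1/n)∑_{i=1}^n T^i x converge in norm to P_T x, where P_T is the mean ergodic projection associated with T. If moreover lim_{n→∞} ‖T^{n+1}x − T^n x‖ = 0 for all x ∈ X, then lim_{n→∞} ‖T^n x − P_T x‖ = 0 for all x ∈ X. -/
open Filter Topology

/-- Let `X` be a complex Banach space and `T` a power bounded operator on `X`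
which is mean ergodic with mean ergodic projection `P` (i.e. the Cesàro averages
`(1/n) ∑_{i=1}^n T^i x` converge in norm to `P x` for every `x`).  If moreover
`‖T^{n+1} x - T^n x‖ → 0` for every `x`, then `T^n x → P x` in norm for every `x`. -/
theorem stmt0 {X : Type*} [NormedAddCommGroup X] [NormedSpace ℂ X] [CompleteSpace X]
    (T : X →L[ℂ] X)
    (hpow : ∃ C : ℝ, ∀ n : ℕ, ‖T ^ n‖ ≤ C)
    (P : X →L[ℂ] X)
    (hme : ∀ x : X,
      Tendsto (fun n : ℕ => (n : ℂ)⁻¹ • ∑ i ∈ Finset.range n, (T ^ (i + 1)) x)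
        atTop (𝓝 (P x)))
    (hdiff : ∀ x : X,
      Tendsto (fun n : ℕ => ‖(T ^ (n + 1)) x - (T ^ n) x‖) atTop (𝓝 0)) :
    ∀ x : X, Tendsto (fun n : ℕ => (T ^ n) x) atTop (𝓝 (P x)) := by
  obtain ⟨C, hC⟩ := hpow
  set C' : ℝ := max C 1 with hC'def
  have hC'pos : 0 < C' := lt_of_lt_of_le one_pos (le_max_right _ _)
  have hbound : ∀ (n : ℕ) (v : X), ‖(T ^ n) v‖ ≤ C' * ‖v‖ := by
    intro n v
    calc ‖(T ^ n) v‖ ≤ ‖T ^ n‖ * ‖v‖ := (T ^ n).le_opNorm v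
      _ ≤ C' * ‖v‖ := by gcongr; exact le_trans (hC n) (le_max_left _ _)
  have happ : ∀ (k : ℕ) (v : X), T ((T ^ k) v) = (T ^ (k + 1)) v := by
    intro k v
    rw [show (T : X →L[ℂ] X) ^ (k + 1) = T * T ^ k from pow_succ' T k]
    rfl
  have happ' : ∀ (k : ℕ) (v : X), (T ^ k) (T v) = (T ^ (k + 1)) v := by
    intro k v
    rw [show (T : X →L[ℂ] X) ^ (k + 1) = T ^ k * T from pow_succ T k]
    rfl
  set A : X → ℕ → X := fun x n => (n : ℂ)⁻¹ • ∑ i ∈ Finset.range n, (T ^ (i + 1)) x with hAdef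
  -- the shift of the Cesàro averages
  have hshift : ∀ x : X, ∀ n : ℕ,
      A (T x) n = A x n + (n : ℂ)⁻¹ • ((T ^ (n + 1)) x - (T ^ 1) x) := by
    intro x n
    simp only [hAdef]
    rw [← smul_add]
    congr 1
    rw [← Finset.sum_range_sub (fun i => (T ^ (i + 1)) x) n, ← Finset.sum_add_distrib]
    refine Finset.sum_congr rfl fun i _ => ?_
    rw [happ']
    abel
  have hshift0 : ∀ x : X, Tendsto (fun n : ℕ => (n : ℂ)⁻¹ • ((T ^ (n + 1)) x - (T ^ 1) x))
      atTop (𝓝 0) := by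
    intro x
    have hb : ∀ n : ℕ, ‖(n : ℂ)⁻¹ • ((T ^ (n + 1)) x - (T ^ 1) x)‖ ≤
        (n : ℝ)⁻¹ * (C' * ‖x‖ + C' * ‖x‖) := by
      intro n
      rw [norm_smul]
      have : ‖((n : ℂ))⁻¹‖ = (n : ℝ)⁻¹ := by
        rw [norm_inv, Complex.norm_natCast]
      rw [this]
      gcongr
      exact le_trans (norm_sub_le _ _) (add_le_add (hbound _ _) (hbound _ _))
    have hlim : Tendsto (fun n : ℕ => (n : ℝ)⁻¹ * (C' * ‖x‖ + C' * ‖x‖)) atTop (𝓝 0) := by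
      have := (tendsto_inv_atTop_nhds_zero_nat (𝕜 := ℝ)).mul_const (C' * ‖x‖ + C' * ‖x‖)
      simpa using this
    exact squeeze_zero_norm hb hlim
  -- P (T x) = P x
  have hPT : ∀ x : X, P (T x) = P x := by
    intro x
    have h1 : Tendsto (fun n : ℕ => A (T x) n) atTop (𝓝 (P x)) := by
      have := (hme x).add (hshift0 x)
      simp only [add_zero] at this
      refine this.congr fun n => (hshift x n).symm
    exact tendsto_nhds_unique (hme (T x)) h1
  -- T (P x) = P x
  have hTP : ∀ x : X, T (P x) = P x := by
    intro x
    have h1 : Tendsto (fun n : ℕ => T (A x n)) atTop (𝓝 (T (P x))) :=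
      (T.continuous.tendsto (P x)).comp (hme x)
    have h2 : ∀ n : ℕ, T (A x n) = A (T x) n := by
      intro n
      simp only [hAdef, map_smul, map_sum]
      congr 1
      refine Finset.sum_congr rfl fun i _ => ?_
      rw [happ, happ']
    have h3 : Tendsto (fun n : ℕ => A (T x) n) atTop (𝓝 (T (P x))) :=
      h1.congr fun n => h2 n
    rw [tendsto_nhds_unique h3 (hme (T x)), hPT]
  have hfix : ∀ (n : ℕ) (x : X), (T ^ n) (P x) = P x := by
    intro n x
    induction n with
    | zero => simp
    | succ k ih =>
      rw [← happ, ih, hTP]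
  intro x
  -- reduce to showing T^n (x) - P x → 0
  have key : Tendsto (fun n : ℕ => (T ^ n) x - P x) atTop (𝓝 0) := by
    rw [NormedAddCommGroup.tendsto_nhds_zero]
    intro ε hε
    obtain ⟨m₀, hm₀⟩ := Metric.tendsto_atTop.mp (hme x) (ε / (2 * C'))
      (by positivity)
    set m : ℕ := max m₀ 1 with hmdef
    have hm1 : 1 ≤ m := le_max_right _ _
    have hm : ‖A x m - P x‖ < ε / (2 * C') := by
      have := hm₀ m (le_max_left _ _)
      rwa [dist_eq_norm] at this
    set w : X := (m : ℂ)⁻¹ • ∑ i ∈ Finset.range m, ∑ j ∈ Finset.range (i + 1), (T ^ j) x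
      with hwdef
    have hw : w - T w = x - A x m := by
      have hTw : T w = (m : ℂ)⁻¹ • ∑ i ∈ Finset.range m,
          ∑ j ∈ Finset.range (i + 1), (T ^ (j + 1)) x := by
        simp only [hwdef, map_smul, map_sum]
        congr 1
        exact Finset.sum_congr rfl fun i _ => Finset.sum_congr rfl fun j _ => happ j x
      rw [hwdef, hTw, ← smul_sub, ← Finset.sum_sub_distrib]
      have h1 : ∀ i ∈ Finset.range m,
          (∑ j ∈ Finset.range (i + 1), (T ^ j) x) -
            (∑ j ∈ Finset.range (i + 1), (T ^ (j + 1)) x) = x - (T ^ (i + 1)) x := by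
        intro i _
        rw [← Finset.sum_sub_distrib]
        have h2 : ∑ j ∈ Finset.range (i + 1), ((T ^ (j + 1)) x - (T ^ j) x)
            = (T ^ (i + 1)) x - (T ^ 0) x := Finset.sum_range_sub (fun j => (T ^ j) x) (i + 1)
        have h3 : ∑ j ∈ Finset.range (i + 1), ((T ^ j) x - (T ^ (j + 1)) x)
            = -((T ^ (i + 1)) x - (T ^ 0) x) := by
          rw [← h2, ← Finset.sum_neg_distrib]
          exact Finset.sum_congr rfl fun j _ => by abel
        rw [h3]
        simp
      rw [Finset.sum_congr rfl h1, Finset.sum_sub_distrib, Finset.sum_const,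
        Finset.card_range, smul_sub]
      have hmx : (m : ℂ)⁻¹ • (m • x) = x := by
        rw [← Nat.cast_smul_eq_nsmul ℂ m x, smul_smul, inv_mul_cancel₀, one_smul]
        exact_mod_cast Nat.one_le_iff_ne_zero.mp hm1
      rw [hmx]
    -- T^n (w - T w) = T^n w - T^(n+1) w → 0
    obtain ⟨N, hNw⟩ := Metric.tendsto_atTop.mp (hdiff w) (ε / 2) (by positivity)
    filter_upwards [eventually_ge_atTop N] with n hn
    have hd : dist ‖(T ^ (n + 1)) w - (T ^ n) w‖ 0 < ε / 2 := hNw n hn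
    rw [Real.dist_0_eq_abs, abs_of_nonneg (norm_nonneg _)] at hd
    have hsplit : (T ^ n) x - P x = (T ^ n) (w - T w) + (T ^ n) (A x m - P x) := by
      rw [hw, map_sub, map_sub, hfix]
      abel
    have hTnw : (T ^ n) (w - T w) = (T ^ n) w - (T ^ (n + 1)) w := by
      rw [map_sub, happ']
    calc ‖(T ^ n) x - P x‖
        ≤ ‖(T ^ n) (w - T w)‖ + ‖(T ^ n) (A x m - P x)‖ := by
          rw [hsplit]; exact norm_add_le _ _
      _ < ε / 2 + ε / 2 := by
          refine add_lt_add_of_lt_of_le ?_ ?_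
          · rw [hTnw, norm_sub_rev]; exact hd
          · calc ‖(T ^ n) (A x m - P x)‖ ≤ C' * ‖A x m - P x‖ := hbound _ _
              _ ≤ C' * (ε / (2 * C')) := by gcongr
              _ = ε / 2 := by field_simp
      _ = ε := by ring
  have := key.add_const (P x)
  simpa using this
end

section
/- Let μ be a strictly aperiodic probability measure on a locally compact Hausdorff group G and let π be a strongly continuous unitary representation of G on a complex Hilbert space H, with μ̂(π)x = ∫_G π(g)x dμ(g). Then the operator μ̂(π) has no eigenvalue ξ with |ξ| = 1 other than possibly ξ = 1; that is, if μ̂(π)x = ξx for some nonzero x ∈ H and |ξ| = 1, then ξ = 1. -/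
open MeasureTheory Filter Topology

/-- The support of a Borel measure. -/
def measureSupport {G : Type*} [TopologicalSpace G] [MeasurableSpace G]
    (μ : Measure G) : Set G :=
  {x : G | ∀ U : Set G, IsOpen U → x ∈ U → 0 < μ U}

/-- A probability measure `μ` on a group `G` is strictly aperiodic if its support is not
contained in a left coset of a proper closed subgroup of `G`. -/
def IsStrictlyAperiodic {G : Type*} [Group G] [TopologicalSpace G] [MeasurableSpace G]
    (μ : Measure G) : Prop :=
  ¬ ∃ (H : Subgroup G) (g : G), IsClosed (H : Set G) ∧ (H : Set G) ≠ Set.univ ∧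
      measureSupport μ ⊆ (fun h => g * h) '' (H : Set G)

/-! Since `‖π g x‖ = ‖x‖ = ‖∫ π g x dμ‖` and a Hilbert space is strictly convex, the average
`ξ x` can only have full norm if `π g x = ξ x` for `μ`-a.e. `g`, hence for all `g` in the support
of `μ` (the set of such `g` is closed). That set is a left coset `g₀ · Stab(x)` of the closed
stabilizer of `x`, so strict aperiodicity forces `Stab(x) = G`; then `ξ x = π g₀ x = x`. -/

theorem ae_eq_integral_of_norm_le_norm_integral {α E : Type*} [MeasurableSpace α]
    [NormedAddCommGroup E] [NormedSpace ℝ E] [CompleteSpace E] [StrictConvexSpace ℝ E]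
    {μ : Measure α} [IsProbabilityMeasure μ] {f : α → E}
    (h : ∀ᵐ a ∂μ, ‖f a‖ ≤ ‖∫ a, f a ∂μ‖) :
    f =ᵐ[μ] fun _ => ∫ a, f a ∂μ := by
  rw [← average_eq_integral]
  refine (ae_eq_const_or_norm_integral_lt_of_norm_le_const h).resolve_right ?_
  simp

theorem measureSupport_subset_of_ae_mem {G : Type*} [TopologicalSpace G] [MeasurableSpace G]
    {μ : Measure G} {A : Set G} (hA : IsClosed A) (h : ∀ᵐ g ∂μ, g ∈ A) :
    measureSupport μ ⊆ A := fun _ hg =>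
  by_contra fun hgA => (hg Aᶜ hA.isOpen_compl hgA).ne' (ae_iff.1 h)

theorem IsStrictlyAperiodic.stabilizer_eq_top {G X : Type*} [Group G] [TopologicalSpace G]
    [MeasurableSpace G] [MulAction G X] [TopologicalSpace X] [T1Space X] {μ : Measure G}
    (hμ : IsStrictlyAperiodic μ) {x : X} (hx : Continuous fun g : G => g • x) {g₀ : G}
    (hsupp : measureSupport μ ⊆ {g | g • x = g₀ • x}) :
    MulAction.stabilizer G x = ⊤ := by
  by_contra hne
  refine hμ ⟨MulAction.stabilizer G x, g₀, isClosed_singleton.preimage hx, ?_, hsupp.trans ?_⟩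
  · exact_mod_cast hne
  · rintro g (hg : g • x = g₀ • x)
    exact ⟨g₀⁻¹ * g, by simp [MulAction.mem_stabilizer_iff, mul_smul, hg], by group⟩

theorem stmt4_general {G : Type*} [Group G] [TopologicalSpace G] [MeasurableSpace G]
    {H : Type*} [NormedAddCommGroup H] [InnerProductSpace ℂ H] [CompleteSpace H]
    (μ : Measure G) [IsProbabilityMeasure μ] (hμ : IsStrictlyAperiodic μ)
    (π : G → H →L[ℂ] H)
    (hπ_mul : ∀ g h : G, π (g * h) = (π g).comp (π h))
    (hπ_one : π 1 = ContinuousLinearMap.id ℂ H)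
    (hπ_iso : ∀ (g : G) (x : H), ‖π g x‖ = ‖x‖)
    (hπ_cont : ∀ x : H, Continuous fun g => π g x)
    (ξ : ℂ) (hξ : ‖ξ‖ = 1) (x : H) (hx : x ≠ 0)
    (heig : (∫ g, π g x ∂μ) = ξ • x) :
    ξ = 1 := by
  let ρ : G →* (H →L[ℂ] H) := ⟨⟨π, hπ_one⟩, hπ_mul⟩
  let _ : MulAction G H := MulAction.compHom H ρ
  -- strict convexity over `ℝ` comes from the underlying real inner product space
  have _ : UniformConvexSpace H := let _ := InnerProductSpace.rclikeToReal ℂ H; inferInstance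
  have hae : ∀ᵐ g ∂μ, g • x = ξ • x := by
    have := ae_eq_integral_of_norm_le_norm_integral (μ := μ) (f := fun g => π g x)
      (ae_of_all _ fun g => by rw [heig, norm_smul, hξ, one_mul, hπ_iso])
    rwa [heig] at this
  obtain ⟨g₀, hg₀⟩ := hae.exists
  have hsupp : measureSupport μ ⊆ {g | g • x = g₀ • x} := by
    rw [hg₀]
    exact measureSupport_subset_of_ae_mem (isClosed_singleton.preimage (hπ_cont x)) hae
  have hfix : g₀ • x = x := by
    rw [← MulAction.mem_stabilizer_iff, hμ.stabilizer_eq_top (hπ_cont x) hsupp]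
    exact Subgroup.mem_top g₀
  exact smul_left_injective ℂ hx (by simpa [hg₀] using hfix)

/-- Let `μ` be a strictly aperiodic probability measure on a locally compact
Hausdorff group `G` and `π` a strongly continuous unitary representation of `G` on a complex
Hilbert space `H`, with `μ̂(π) x = ∫ π(g) x dμ(g)`.  Then `μ̂(π)` has no unimodular eigenvalue
other than possibly `1`: if `μ̂(π) x = ξ x` for some `x ≠ 0` and `‖ξ‖ = 1`, then `ξ = 1`. -/
theorem stmt4 {G : Type*} [Group G] [TopologicalSpace G] [IsTopologicalGroup G]
    [LocallyCompactSpace G] [T2Space G] [MeasurableSpace G] [BorelSpace G]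
    {H : Type*} [NormedAddCommGroup H] [InnerProductSpace ℂ H] [CompleteSpace H]
    (μ : Measure G) [IsProbabilityMeasure μ] (hμ : IsStrictlyAperiodic μ)
    (π : G → H →L[ℂ] H)
    (hπ_mul : ∀ g h : G, π (g * h) = (π g).comp (π h))
    (hπ_one : π 1 = ContinuousLinearMap.id ℂ H)
    (hπ_iso : ∀ (g : G) (x : H), ‖π g x‖ = ‖x‖)
    (hπ_cont : ∀ x : H, Continuous fun g => π g x)
    (ξ : ℂ) (hξ : ‖ξ‖ = 1) (x : H) (hx : x ≠ 0)
    (heig : (∫ g, π g x ∂μ) = ξ • x) :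
    ξ = 1 :=
  stmt4_general μ hμ π hπ_mul hπ_one hπ_iso hπ_cont ξ hξ x hx heig
end

section
/- Let G be a compact Hausdorff group and let (μ_n) be a sequence of complex Borel measures on G with sup_n ‖μ_n‖ < ∞ (total variation norms), and let μ be a complex Borel measure on G. Then the following are equivalent: (a) μ_n → μ weak*, i.e. ∫_G f dμ_n → ∫_G f dμ for every continuous f : G → ℂ; (b) for every continuous f : G → ℂ, μ_n ∗ f → μ ∗ f uniformly on G. -/
open MeasureTheory Filter Topology ZeroAtInfty

section ComplexMeasureTools

variable {α : Type*} [MeasurableSpace α]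

/-- The positive part of the real part of a complex measure. -/
noncomputable def cRePos (c : ComplexMeasure α) : Measure α :=
  (ComplexMeasure.re c).toJordanDecomposition.posPart

/-- The negative part of the real part of a complex measure. -/
noncomputable def cReNeg (c : ComplexMeasure α) : Measure α :=
  (ComplexMeasure.re c).toJordanDecomposition.negPart

/-- The positive part of the imaginary part of a complex measure. -/
noncomputable def cImPos (c : ComplexMeasure α) : Measure α :=
  (ComplexMeasure.im c).toJordanDecomposition.posPart

/-- The negative part of the imaginary part of a complex measure. -/
noncomputable def cImNeg (c : ComplexMeasure α) : Measure α :=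
  (ComplexMeasure.im c).toJordanDecomposition.negPart

instance (c : ComplexMeasure α) : IsFiniteMeasure (cRePos c) := by
  unfold cRePos; infer_instance
instance (c : ComplexMeasure α) : IsFiniteMeasure (cReNeg c) := by
  unfold cReNeg; infer_instance
instance (c : ComplexMeasure α) : IsFiniteMeasure (cImPos c) := by
  unfold cImPos; infer_instance
instance (c : ComplexMeasure α) : IsFiniteMeasure (cImNeg c) := by
  unfold cImNeg; infer_instance

/-- The integral `∫ f dc` of a (complex-valued) function against a complex measure `c`,
defined through the Jordan decompositions of the real and imaginary parts of `c`. -/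
noncomputable def cInt (c : ComplexMeasure α) (f : α → ℂ) : ℂ :=
  ((∫ x, f x ∂(cRePos c)) - ∫ x, f x ∂(cReNeg c)) +
    Complex.I * ((∫ x, f x ∂(cImPos c)) - ∫ x, f x ∂(cImNeg c))

/-- The total variation norm of a complex measure: the supremum of `∑ |c(Eᵢ)|` over all finite
families of pairwise disjoint measurable sets. -/
noncomputable def tvNorm (c : ComplexMeasure α) : ℝ :=
  sSup {r : ℝ | ∃ P : Finset (Set α), (∀ E ∈ P, MeasurableSet E) ∧
    (P : Set (Set α)).PairwiseDisjoint id ∧ r = ∑ E ∈ P, ‖c E‖}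

end ComplexMeasureTools

section GroupTools

variable {G : Type*} [Group G] [TopologicalSpace G] [MeasurableSpace G]

/-- The convolution of two complex measures, defined componentwise through the Jordan
decompositions by bilinearity from the convolution (pushforward of the product measure under
multiplication) of finite nonnegative measures. -/
noncomputable def cconv (c d : ComplexMeasure G) : ComplexMeasure G :=
  MeasureTheory.SignedMeasure.toComplexMeasure
    (((((cRePos c).mconv (cRePos d) + (cReNeg c).mconv (cReNeg d)) +
        ((cImPos c).mconv (cImNeg d) + (cImNeg c).mconv (cImPos d))).toSignedMeasure) -
      ((((cRePos c).mconv (cReNeg d) + (cReNeg c).mconv (cRePos d)) +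
        ((cImPos c).mconv (cImPos d) + (cImNeg c).mconv (cImNeg d))).toSignedMeasure))
    (((((cRePos c).mconv (cImPos d) + (cReNeg c).mconv (cImNeg d)) +
        ((cImPos c).mconv (cRePos d) + (cImNeg c).mconv (cReNeg d))).toSignedMeasure) -
      ((((cRePos c).mconv (cImNeg d) + (cReNeg c).mconv (cImPos d)) +
        ((cImPos c).mconv (cReNeg d) + (cImNeg c).mconv (cRePos d))).toSignedMeasure))

/-- The Dirac measure at the identity, as a complex measure. -/
noncomputable def cdirac : ComplexMeasure G :=
  MeasureTheory.SignedMeasure.toComplexMeasure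
    (MeasureTheory.Measure.toSignedMeasure (MeasureTheory.Measure.dirac (1 : G))) 0

/-- Convolution powers of a complex measure, with `c^0 = δ_e`. -/
noncomputable def cpow (c : ComplexMeasure G) : ℕ → ComplexMeasure G
  | 0 => cdirac
  | n + 1 => cconv (cpow c n) c

end GroupTools

/-- The convolution `ν ∗ f` of a complex measure and a function:
`(ν ∗ f)(x) = ∫ f(g⁻¹ x) dν(g)`. -/
noncomputable def cmeasConv {G : Type*} [Group G] [TopologicalSpace G] [MeasurableSpace G]
    (ν : ComplexMeasure G) (f : G → ℂ) : G → ℂ :=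
  fun x => cInt ν (fun g => f (g⁻¹ * x))

/-!
Integration against a complex measure `ν` is a functional on `C(G, ℂ)` of norm at most
`2 * tvNorm ν`: its real and imaginary parts have Jordan decompositions whose total variations are
dominated by the variation of `ν`. A bounded sequence `μₙ` therefore gives uniformly Lipschitz
functionals, and since `x ↦ (g ↦ f (g⁻¹ * x))` is continuous from `G` to `C(G, ℂ)`, the
functions `μₙ ∗ f` form an equicontinuous family on the compact group `G`. For such a family,
pointwise convergence, which is weak* convergence tested on the translates of `f`, is uniform
(Ascoli). Conversely, evaluating `μₙ ∗ f̌` at the identity, with `f̌ g = f g⁻¹`, recovers `∫ f dμₙ`.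
-/

namespace MeasureTheory.ComplexMeasure

variable {α : Type*} [MeasurableSpace α]

lemma variation_re_le (c : ComplexMeasure α) :
    VectorMeasure.variation (re c) ≤ VectorMeasure.variation c :=
  VectorMeasure.variation_le_of_forall_enorm_le fun E _ =>
    (enorm_le_iff_norm_le.2 (Complex.abs_re_le_norm (c E))).trans (c.enorm_measure_le_variation E)

lemma variation_im_le (c : ComplexMeasure α) :
    VectorMeasure.variation (im c) ≤ VectorMeasure.variation c :=
  VectorMeasure.variation_le_of_forall_enorm_le fun E _ =>
    (enorm_le_iff_norm_le.2 (Complex.abs_im_le_norm (c E))).trans (c.enorm_measure_le_variation E)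

lemma variation_le_totalVariation_re_add_im (c : ComplexMeasure α) :
    VectorMeasure.variation c ≤ (re c).totalVariation + (im c).totalVariation :=
  VectorMeasure.variation_le_of_forall_enorm_le fun E _ => by
    calc ‖c E‖ₑ ≤ ‖(c E).re‖ₑ + ‖(c E).im‖ₑ := by
          rw [← ofReal_norm, ← ofReal_norm, ← ofReal_norm,
            ← ENNReal.ofReal_add (norm_nonneg _) (norm_nonneg _)]
          exact ENNReal.ofReal_le_ofReal (Complex.norm_le_abs_re_add_abs_im (c E))
      _ ≤ _ := add_le_add ((re c).enorm_le_totalVariation E) ((im c).enorm_le_totalVariation E)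

instance (c : ComplexMeasure α) : IsFiniteMeasure (VectorMeasure.variation c) :=
  isFiniteMeasure_of_le _ (variation_le_totalVariation_re_add_im c)

end MeasureTheory.ComplexMeasure

lemma MeasureTheory.SignedMeasure.norm_integral_posPart_sub_integral_negPart_le
    {α : Type*} [MeasurableSpace α] (s : SignedMeasure α) {f : α → ℂ} {C : ℝ}
    (hf : ∀ x, ‖f x‖ ≤ C) :
    ‖(∫ x, f x ∂s.toJordanDecomposition.posPart) - ∫ x, f x ∂s.toJordanDecomposition.negPart‖ ≤
      C * s.totalVariation.real Set.univ := by
  rw [SignedMeasure.totalVariation, measureReal_add_apply, mul_add]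
  exact (norm_sub_le _ _).trans (add_le_add
    (norm_integral_le_of_norm_le_const (.of_forall hf))
    (norm_integral_le_of_norm_le_const (.of_forall hf)))

section TotalVariationNorm

variable {α : Type*} [MeasurableSpace α]

theorem tvNorm_eq_variation_real (c : ComplexMeasure α) :
    tvNorm c = (VectorMeasure.variation c).real Set.univ := by
  refine csSup_eq_of_forall_le_of_forall_lt_exists_gt ⟨0, ∅, by simp⟩ ?_ fun w hw => ?_
  · rintro r ⟨P, -, hdisj, rfl⟩
    have h := c.le_variation MeasurableSet.univ (fun E _ => Set.subset_univ E) hdisj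
    rw [← ENNReal.toReal_le_toReal (ENNReal.sum_ne_top.2 fun _ _ => enorm_ne_top)
      (measure_ne_top _ _), ENNReal.toReal_sum fun _ _ => enorm_ne_top] at h
    simpa only [toReal_enorm, measureReal_def] using h
  · rcases lt_or_ge w 0 with hw0 | hw0
    · exact ⟨0, ⟨∅, by simp⟩, hw0⟩
    have : ENNReal.ofReal w < VectorMeasure.variation c Set.univ := by
      rwa [← ENNReal.ofReal_toReal (measure_ne_top (VectorMeasure.variation c) Set.univ),
        ENNReal.ofReal_lt_ofReal_iff_of_nonneg hw0]
    obtain ⟨P, -, hdisj, hmeas, hlt⟩ := c.exists_lt_sum_of_lt_variation MeasurableSet.univ this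
    refine ⟨∑ E ∈ P, ‖c E‖, ⟨P, hmeas, hdisj, rfl⟩, ?_⟩
    rwa [← ENNReal.ofReal_lt_ofReal_iff_of_nonneg hw0, ENNReal.ofReal_sum_of_nonneg
      fun _ _ => norm_nonneg _, funext fun E => ofReal_norm (c E)]

lemma totalVariation_re_real_univ_le_tvNorm (c : ComplexMeasure α) :
    (ComplexMeasure.re c).totalVariation.real Set.univ ≤ tvNorm c := by
  rw [tvNorm_eq_variation_real, SignedMeasure.totalVariation_eq_variation]
  exact ENNReal.toReal_mono (measure_ne_top _ _) (Measure.le_iff'.1 c.variation_re_le _)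

lemma totalVariation_im_real_univ_le_tvNorm (c : ComplexMeasure α) :
    (ComplexMeasure.im c).totalVariation.real Set.univ ≤ tvNorm c := by
  rw [tvNorm_eq_variation_real, SignedMeasure.totalVariation_eq_variation]
  exact ENNReal.toReal_mono (measure_ne_top _ _) (Measure.le_iff'.1 c.variation_im_le _)

lemma norm_cInt_le (c : ComplexMeasure α) {f : α → ℂ} {C : ℝ} (hf : ∀ x, ‖f x‖ ≤ C)
    (hC : 0 ≤ C) : ‖cInt c f‖ ≤ 2 * tvNorm c * C := by
  have hre := (ComplexMeasure.re c).norm_integral_posPart_sub_integral_negPart_le hf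
  have him := (ComplexMeasure.im c).norm_integral_posPart_sub_integral_negPart_le hf
  calc ‖cInt c f‖ ≤ C * (ComplexMeasure.re c).totalVariation.real Set.univ +
        C * (ComplexMeasure.im c).totalVariation.real Set.univ := by
        refine (norm_add_le _ _).trans (add_le_add hre ?_)
        rwa [norm_mul, Complex.norm_I, one_mul]
    _ ≤ C * tvNorm c + C * tvNorm c := by
        gcongr
        exacts [totalVariation_re_real_univ_le_tvNorm c, totalVariation_im_real_univ_le_tvNorm c]
    _ = 2 * tvNorm c * C := by ring

variable [TopologicalSpace α] [OpensMeasurableSpace α] [CompactSpace α]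

lemma cInt_sub (c : ComplexMeasure α) (f g : C(α, ℂ)) :
    cInt c ⇑(f - g) = cInt c f - cInt c g := by
  have hint : ∀ (ν : Measure α) [IsFiniteMeasure ν] (h : C(α, ℂ)), Integrable h ν := fun ν _ h =>
    h.continuous.integrable_of_hasCompactSupport (.of_compactSpace _)
  simp only [cInt, ContinuousMap.coe_sub, Pi.sub_apply, integral_sub (hint _ f) (hint _ g)]
  ring

lemma lipschitzWith_cInt (c : ComplexMeasure α) :
    LipschitzWith (2 * tvNorm c).toNNReal fun f : C(α, ℂ) => cInt c f :=
  LipschitzWith.of_dist_le' fun f g => by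
    simpa only [dist_eq_norm, cInt_sub] using
      norm_cInt_le c (f := ⇑(f - g)) (ContinuousMap.norm_coe_le_norm _) (norm_nonneg _)

end TotalVariationNorm

theorem Equicontinuous.tendstoUniformly_of_tendsto {ι X β : Type*} [TopologicalSpace X]
    [CompactSpace X] [UniformSpace β] {F : ι → X → β} (hF : Equicontinuous F) {p : Filter ι}
    {f : X → β} (h : ∀ x, Tendsto (fun i => F i x) p (𝓝 (f x))) : TendstoUniformly F f p :=
  UniformFun.tendsto_iff_tendstoUniformly.1 <|
    (hF.tendsto_uniformFun_iff_pi p f).2 (tendsto_pi_nhds.2 h)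

lemma equicontinuous_cmeasConv {G ι : Type*} [Group G] [TopologicalSpace G] [IsTopologicalGroup G]
    [CompactSpace G] [MeasurableSpace G] [OpensMeasurableSpace G] (ν : ι → ComplexMeasure G)
    {C : ℝ} (hC : ∀ i, tvNorm (ν i) ≤ C) (f : C(G, ℂ)) :
    Equicontinuous fun i => cmeasConv (ν i) f := by
  let translates : C(G, C(G, ℂ)) :=
    ContinuousMap.curry ⟨fun p : G × G => f (p.2⁻¹ * p.1), by fun_prop⟩
  have hint : UniformEquicontinuous fun i (φ : C(G, ℂ)) => cInt (ν i) φ :=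
    LipschitzWith.uniformEquicontinuous _ (2 * C).toNNReal fun i =>
      (lipschitzWith_cInt (ν i)).weaken (by gcongr; exact hC i)
  exact equicontinuous_iff_continuous.2
    ((uniformEquicontinuous_iff_uniformContinuous.1 hint).continuous.comp translates.continuous)

theorem stmt8_general {G : Type*} [Group G] [TopologicalSpace G] [IsTopologicalGroup G]
    [CompactSpace G] [MeasurableSpace G] [BorelSpace G]
    (μseq : ℕ → ComplexMeasure G) (hbd : ∃ C : ℝ, ∀ n : ℕ, tvNorm (μseq n) ≤ C)
    (μ : ComplexMeasure G) :
    (∀ f : C(G, ℂ),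
        Filter.Tendsto (fun n : ℕ => cInt (μseq n) f) Filter.atTop (𝓝 (cInt μ f)))
      ↔ (∀ f : C(G, ℂ),
        TendstoUniformly (fun (n : ℕ) (x : G) => cmeasConv (μseq n) f x)
          (fun x => cmeasConv μ f x) Filter.atTop) := by
  refine ⟨fun hweak f => ?_, fun hunif f => ?_⟩
  · obtain ⟨C, hC⟩ := hbd
    exact (equicontinuous_cmeasConv μseq hC f).tendstoUniformly_of_tendsto fun x =>
      hweak (f.comp ⟨fun g => g⁻¹ * x, by fun_prop⟩)
  · simpa [cmeasConv] using (hunif (f.comp ⟨fun g => g⁻¹, continuous_inv⟩)).tendsto_at 1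

/-- Let `G` be a compact Hausdorff group, `(μₙ)` a sequence of complex Borel
measures on `G` which is bounded in total variation norm, and `μ` a complex Borel measure on
`G`.  Then `μₙ → μ` weak* (i.e. `∫ f dμₙ → ∫ f dμ` for every continuous `f : G → ℂ`) if and
only if `μₙ ∗ f → μ ∗ f` uniformly on `G` for every continuous `f : G → ℂ`. -/
theorem stmt8 {G : Type*} [Group G] [TopologicalSpace G] [IsTopologicalGroup G]
    [CompactSpace G] [T2Space G] [MeasurableSpace G] [BorelSpace G]
    (μseq : ℕ → ComplexMeasure G) (hbd : ∃ C : ℝ, ∀ n : ℕ, tvNorm (μseq n) ≤ C)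
    (μ : ComplexMeasure G) :
    (∀ f : C(G, ℂ),
        Filter.Tendsto (fun n : ℕ => cInt (μseq n) f) Filter.atTop (𝓝 (cInt μ f)))
      ↔ (∀ f : C(G, ℂ),
        TendstoUniformly (fun (n : ℕ) (x : G) => cmeasConv (μseq n) f x)
          (fun x => cmeasConv μ f x) Filter.atTop) :=
  stmt8_general μseq hbd μ
end
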